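/- arXiv:1609.02251 — 8 statements merged into one kernel-verified Lean document; each statement's English description precedes it below -/
import Mathlib

section
/- Let K ⊆ C ⊆ M be languages over Σ. Then K is C-observable if and only if both (i') D(K̄) ∩ M̄ ⊆ K̄ and (ii') [K] ∩ (C̄ ∩ M) = K hold. -/
open Set

namespace RelObs

variable {α : Type*}

/-- Prefix closure of a language. -/
def pre (L : Set (List α)) : Set (List α) := {s | ∃ t ∈ L, s <+: t}

/-- Natural projection `P`: erase unobservable events (those with `obs a = false`). -/
def proj (obs : α → Bool) (s : List α) : List α := s.filter obs

/-- `[N] := P⁻¹ P (N)`. -/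
def brack (obs : α → Bool) (N : Set (List α)) : Set (List α) :=
  {s | ∃ t ∈ N, proj obs s = proj obs t}

/-- `L.σ := { s σ | s ∈ L }`. -/
def catSig (L : Set (List α)) (σ : α) : Set (List α) := {w | ∃ s ∈ L, w = s ++ [σ]}

/-- `D(A) := ⋃_{σ∈Σ} ([A ∩ C̄.σ] ∩ C̄.σ)`. -/
def Dop (obs : α → Bool) (C A : Set (List α)) : Set (List α) :=
  ⋃ σ : α, brack obs (A ∩ catSig (pre C) σ) ∩ catSig (pre C) σ

/-- Relative observability of `K` w.r.t. plant `M`, ambient `C`, projection given by `obs`. -/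
def CObservable (obs : α → Bool) (M C K : Set (List α)) : Prop :=
  (∀ (s s' : List α) (σ : α), s ++ [σ] ∈ pre K → s' ∈ pre C → s' ++ [σ] ∈ pre M →
      proj obs s = proj obs s' → s' ++ [σ] ∈ pre K) ∧
  (∀ s s' : List α, s ∈ K → s' ∈ pre C ∩ M → proj obs s = proj obs s' → s' ∈ K)

/-- The supremal `C`-observable sublanguage of `C`. -/
def supO (obs : α → Bool) (M C : Set (List α)) : Set (List α) :=
  ⋃₀ {K | K ⊆ C ∧ CObservable obs M C K}

/-- `F(K) := { s ∈ K̄ | D(s̄) ∩ M̄ ⊆ K̄ }`. -/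
def Fop (obs : α → Bool) (M C K : Set (List α)) : Set (List α) :=
  {s | s ∈ pre K ∧ Dop obs C (pre {s}) ∩ pre M ⊆ pre K}

/-- Supremal sublanguage of `A` normal w.r.t. `H`. -/
def supN (obs : α → Bool) (H A : Set (List α)) : Set (List α) :=
  ⋃₀ {A' | A' ⊆ A ∧ brack obs A' ∩ H = A'}

/-- `Ω(K) := sup N (K ∩ F(K), C̄ ∩ M)`. -/
def Omega (obs : α → Bool) (M C K : Set (List α)) : Set (List α) :=
  supN obs (pre C ∩ M) (K ∩ Fop obs M C K)

/-- Controllability of `K` w.r.t. `M`, with uncontrollable events `Su`. -/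
def Controllable (Su : Set α) (M K : Set (List α)) : Prop :=
  ∀ (s : List α) (σ : α), σ ∈ Su → s ∈ pre K → s ++ [σ] ∈ pre M → s ++ [σ] ∈ pre K

/-- Supremal controllable sublanguage of `K`. -/
def supC (Su : Set α) (M K : Set (List α)) : Set (List α) :=
  ⋃₀ {K' | K' ⊆ K ∧ Controllable Su M K'}

/-- `Γ(K) := sup O (sup C (K))`, the supremal `C`-observable sublanguage of `sup C(K)`. -/
def Gamma (obs : α → Bool) (Su : Set α) (M C K : Set (List α)) : Set (List α) :=
  ⋃₀ {K' | K' ⊆ supC Su M K ∧ CObservable obs M C K'}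

/-- Supremal controllable and `C`-observable sublanguage of `C`. -/
def supCO (obs : α → Bool) (Su : Set α) (M C : Set (List α)) : Set (List α) :=
  ⋃₀ {K | K ⊆ C ∧ Controllable Su M K ∧ CObservable obs M C K}

/-- Nerode equivalence of a language, as a setoid on `Σ*`. -/
def NerS (L : Set (List α)) : Setoid (List α) :=
  ⟨fun s t => ∀ w, s ++ w ∈ L ↔ t ++ w ∈ L,
   ⟨fun _ _ => Iff.rfl, fun h w => (h w).symm, fun h1 h2 w => (h1 w).trans (h2 w)⟩⟩

/-- The two-block equivalence `{A, Σ* − A}`. -/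
def blockS (A : Set (List α)) : Setoid (List α) :=
  ⟨fun s t => s ∈ A ↔ t ∈ A, ⟨fun _ => Iff.rfl, fun h => h.symm, fun h1 h2 => h1.trans h2⟩⟩

/-- Right congruence on `Σ*`. -/
def RightCong (ρ : Setoid (List α)) : Prop :=
  ∀ s t u : List α, ρ.r s t → ρ.r (s ++ u) (t ++ u)

/-- `L1` is `ρ`-supported on `L2`. -/
def SupportedOn (ρ : Setoid (List α)) (L1 L2 : Set (List α)) : Prop :=
  pre L1 ⊆ pre L2 ∧ blockS (pre L1) ⊓ ρ ⊓ NerS L2 ≤ NerS L1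

/-- `‖L‖`, the number of Nerode equivalence classes of `L`. -/
noncomputable def nClasses (L : Set (List α)) : ℕ := Nat.card (Quotient (NerS L))

/-- A language is regular iff its Nerode equivalence has finitely many classes. -/
def Regular (L : Set (List α)) : Prop := Finite (Quotient (NerS L))

/-- `℘(π) := ker f_π`, where `f_π(s) = { P_π(s') | s' ∈ [s] ∩ (C̄ ∩ M) }`. -/
def pw (obs : α → Bool) (M C : Set (List α)) (π : Setoid (List α)) : Setoid (List α) :=
  Setoid.ker (fun s => Quotient.mk π '' (brack obs {s} ∩ (pre C ∩ M)))

/-- `Ñ(L) := { s ∈ L | [s] ⊆ L }`. -/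
def tilN (obs : α → Bool) (L : Set (List α)) : Set (List α) :=
  {s | s ∈ L ∧ brack obs {s} ⊆ L}

/-- Supremal prefix-closed sublanguage of `A`. -/
def supFhat (A : Set (List α)) : Set (List α) :=
  ⋃₀ {A' | A' ⊆ A ∧ pre A' = A'}

end RelObs

open RelObs

lemma proj_append {α : Type*} (obs : α → Bool) (s t : List α) :
    proj obs (s ++ t) = proj obs s ++ proj obs t := List.filter_append ..

lemma proj_snoc_eq {α : Type*} (obs : α → Bool) (s s' : List α) (σ : α)
    (h : proj obs s = proj obs s') :
    proj obs (s ++ [σ]) = proj obs (s' ++ [σ]) := by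
  simp [proj_append, h]

lemma proj_snoc_cancel {α : Type*} (obs : α → Bool) (s s' : List α) (σ : α)
    (h : proj obs (s ++ [σ]) = proj obs (s' ++ [σ])) :
    proj obs s = proj obs s' := by
  simp only [proj_append] at h
  exact List.append_cancel_right h

lemma subset_pre {α : Type*} (L : Set (List α)) : L ⊆ pre L :=
  fun s hs => ⟨s, hs, List.prefix_refl s⟩

lemma pre_mono {α : Type*} {L L' : Set (List α)} (h : L ⊆ L') : pre L ⊆ pre L' :=
  fun _ ⟨t, ht, hp⟩ => ⟨t, h ht, hp⟩

/-- characterization of relative observability. -/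
theorem statement0 {α : Type*} [Fintype α] (obs : α → Bool) (M C K : Set (List α))
    (hCM : C ⊆ M) (hKC : K ⊆ C) :
    CObservable obs M C K ↔
      (Dop obs C (pre K) ∩ pre M ⊆ pre K ∧
        brack obs K ∩ (pre C ∩ M) = K) := by
  constructor
  · rintro ⟨h1, h2⟩
    constructor
    · rintro w ⟨hD, hM⟩
      rcases Set.mem_iUnion.1 hD with ⟨σ, ⟨t, ⟨htK, s, hsC, rfl⟩, hproj⟩, s', hs'C, rfl⟩
      exact h1 s s' σ htK hs'C hM (proj_snoc_cancel obs s s' σ hproj.symm)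
    · apply Set.Subset.antisymm
      · rintro s' ⟨⟨s, hsK, hproj⟩, hs'⟩
        exact h2 s s' hsK hs' hproj.symm
      · intro s hs
        exact ⟨⟨s, hs, rfl⟩, subset_pre C (hKC hs), hCM (hKC hs)⟩
  · rintro ⟨h1, h2⟩
    constructor
    · intro s s' σ hsK hs'C hs'M hproj
      apply h1
      refine ⟨Set.mem_iUnion.2 ⟨σ, ⟨s ++ [σ], ⟨hsK, s, ?_, rfl⟩,
        (proj_snoc_eq obs s s' σ hproj).symm⟩, s', hs'C, rfl⟩, hs'M⟩
      rcases pre_mono hKC hsK with ⟨t, htC, hp⟩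
      exact ⟨t, htC, (List.prefix_append s [σ]).trans hp⟩
    · intro s s' hsK hs' hproj
      rw [← h2]
      exact ⟨⟨s, hsK, hproj.symm⟩, hs'⟩
end

section
/- If K ⊆ C is C-observable, then F(K) = K̄ (the prefix closure of K). -/
open Set

open RelObs

/-- if `K` is `C`-observable then `F(K) = K̄`. -/
theorem statement2 {α : Type*} [Fintype α] (obs : α → Bool) (M C K : Set (List α))
    (hCM : C ⊆ M) (hKC : K ⊆ C) (hobs : CObservable obs M C K) :
    Fop obs M C K = pre K := by
  ext s
  constructor
  · exact fun h => h.1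
  · intro hs
    refine ⟨hs, ?_⟩
    rintro w ⟨hD, hwM⟩
    rcases Set.mem_iUnion.mp hD with ⟨σ, ⟨t, ⟨ht1, ht2⟩, hproj⟩, hw⟩
    rcases hw with ⟨s', hs'C, rfl⟩
    rcases ht2 with ⟨u, huC, rfl⟩
    -- t = u ++ [σ] is a prefix of s, so u ++ [σ] ∈ pre K
    have htK : u ++ [σ] ∈ pre K := by
      rcases ht1 with ⟨x, hx, hpx⟩
      rcases hs with ⟨y, hy, hsy⟩
      have : x = s := by rcases hx with rfl; rfl
      subst this
      exact ⟨y, hy, hpx.trans hsy⟩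
    have hprojeq : proj obs s' = proj obs u := by
      have h1 : proj obs (s' ++ [σ]) = proj obs (u ++ [σ]) := hproj
      simp only [proj, List.filter_append] at h1
      cases h : obs σ <;> simp [h] at h1 <;> exact h1
    exact hobs.1 u s' σ htK hs'C hwM hprojeq.symm
end

section
/- Let K ⊆ C. If K = Ω(K), then K is C-observable; in particular, K is normal with respect to C̄ ∩ M (i.e. [K] ∩ (C̄ ∩ M) = K) and D(K̄) ∩ M̄ ⊆ K̄. -/
open Set

open RelObs

/-- every fixpoint of `Ω` is `C`-observable, normal w.r.t. `C̄ ∩ M`,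
and satisfies `D(K̄) ∩ M̄ ⊆ K̄`. -/
theorem statement3 {α : Type*} [Fintype α] (obs : α → Bool) (M C K : Set (List α))
    (hCM : C ⊆ M) (hKC : K ⊆ C) (hfix : K = Omega obs M C K) :
    CObservable obs M C K ∧
      brack obs K ∩ (pre C ∩ M) = K ∧
      Dop obs C (pre K) ∩ pre M ⊆ pre K := by
  -- K ⊆ K ∩ F(K) and each element of K lies in a normal component
  have hmem : ∀ s ∈ K, s ∈ K ∩ Fop obs M C K := by
    intro s hs
    rw [hfix] at hs
    obtain ⟨A, ⟨hA1, _⟩, hsA⟩ := hs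
    exact hA1 hsA
  have hKF : K ⊆ Fop obs M C K := fun s hs => (hmem s hs).2
  -- normality
  have hnorm : brack obs K ∩ (pre C ∩ M) = K := by
    apply Set.Subset.antisymm
    · rintro t ⟨⟨u, hu, htu⟩, ht2⟩
      rw [hfix] at hu
      obtain ⟨A, ⟨hA1, hA2⟩, huA⟩ := hu
      have : t ∈ brack obs A ∩ (pre C ∩ M) := ⟨⟨u, huA, htu⟩, ht2⟩
      rw [hA2] at this
      rw [hfix]
      exact ⟨A, ⟨hA1, hA2⟩, this⟩
    · intro s hs
      exact ⟨⟨s, hs, rfl⟩, ⟨s, hKC hs, List.prefix_refl s⟩, hCM (hKC hs)⟩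
  -- the D condition
  have hD : Dop obs C (pre K) ∩ pre M ⊆ pre K := by
    rintro w ⟨hw1, hw2⟩
    obtain ⟨S, ⟨σ, rfl⟩, ⟨u, ⟨hu1, hu2⟩, hwu⟩, hw3⟩ := hw1
    obtain ⟨t, ht, hut⟩ := hu1
    have ht' := hKF ht
    apply ht'.2
    refine ⟨Set.mem_iUnion.2 ⟨σ, ⟨u, ⟨⟨t, rfl, hut⟩, hu2⟩, hwu⟩, hw3⟩, hw2⟩
  refine ⟨⟨?_, ?_⟩, hnorm, hD⟩
  · intro s s' σ hsK hs'C hs'M hps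
    apply hD
    have hsKpre : s ∈ pre K := by
      obtain ⟨t, ht, hpt⟩ := hsK
      exact ⟨t, ht, ((s.prefix_append [σ]).trans hpt)⟩
    refine ⟨Set.mem_iUnion.2 ⟨σ, ⟨s ++ [σ], ⟨hsK, s, ?_, rfl⟩, ?_⟩, s', hs'C, rfl⟩, hs'M⟩
    · obtain ⟨t, ht, hpt⟩ := hsKpre
      exact ⟨t, hKC ht, hpt⟩
    · simp only [proj] at hps ⊢
      simp [List.filter_append, hps]
  · intro s s' hs hs' hps
    rw [← hnorm]
    exact ⟨⟨s, hs, hps.symm⟩, hs'⟩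
end

section
/- The supremal relatively observable sublanguage sup O(C) is a fixpoint of Ω, i.e. sup O(C) = Ω(sup O(C)); moreover, every K ⊆ C satisfying K = Ω(K) satisfies K ⊆ sup O(C). Hence sup O(C) is the largest fixpoint of Ω among sublanguages of C. -/
open Set

open RelObs

namespace RelObs

variable {α : Type*}

lemma pre_mono {L L' : Set (List α)} (h : L ⊆ L') : pre L ⊆ pre L' :=
  fun _ ⟨t, ht, hp⟩ => ⟨t, h ht, hp⟩

lemma mem_pre_of_prefix {L : Set (List α)} {s t : List α} (h : t ∈ pre L) (hp : s <+: t) :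
    s ∈ pre L := by obtain ⟨u, hu, hp'⟩ := h; exact ⟨u, hu, hp.trans hp'⟩

lemma subset_pre {L : Set (List α)} : L ⊆ pre L := fun s hs => ⟨s, hs, List.prefix_rfl⟩

lemma proj_append (obs : α → Bool) (s t : List α) :
    proj obs (s ++ t) = proj obs s ++ proj obs t := List.filter_append _ _

lemma proj_cancel {obs : α → Bool} {s s' : List α} {σ : α}
    (h : proj obs (s ++ [σ]) = proj obs (s' ++ [σ])) : proj obs s = proj obs s' := by
  rw [proj_append, proj_append] at h
  exact List.append_cancel_right h

lemma supN_subset (obs : α → Bool) (H A : Set (List α)) : supN obs H A ⊆ A :=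
  fun _ ⟨_, ⟨h1, _⟩, hs⟩ => h1 hs

lemma supO_subset (obs : α → Bool) (M C : Set (List α)) : supO obs M C ⊆ C :=
  fun _ ⟨_, ⟨h1, _⟩, hs⟩ => h1 hs

lemma supO_obs (obs : α → Bool) (M C : Set (List α)) : CObservable obs M C (supO obs M C) := by
  constructor
  · rintro s s' σ ⟨t, ⟨K, ⟨hKC, hKo⟩, htK⟩, hp⟩ hs' hM hproj
    have h1 : s ++ [σ] ∈ pre K := ⟨t, htK, hp⟩
    have h2 := hKo.1 s s' σ h1 hs' hM hproj
    have hsub : K ⊆ supO obs M C := fun x hx => ⟨K, ⟨hKC, hKo⟩, hx⟩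
    exact pre_mono hsub h2
  · rintro s s' ⟨K, ⟨hKC, hKo⟩, hsK⟩ hs' hproj
    exact ⟨K, ⟨hKC, hKo⟩, hKo.2 s s' hsK hs' hproj⟩

lemma obs_fix (obs : α → Bool) (M C K : Set (List α)) (hCM : C ⊆ M)
    (hKC : K ⊆ C) (hobs : CObservable obs M C K) : Omega obs M C K = K := by
  apply Set.Subset.antisymm
  · exact (supN_subset _ _ _).trans Set.inter_subset_left
  · intro s hs
    refine ⟨K, ⟨?_, ?_⟩, hs⟩
    · -- K ⊆ K ∩ F(K)
      intro t ht
      refine ⟨ht, subset_pre ht, ?_⟩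
      rintro w ⟨hD, hwM⟩
      obtain ⟨σ, hw⟩ := Set.mem_iUnion.mp hD
      obtain ⟨⟨x, ⟨hxpre, hxcat⟩, hproj⟩, hwcat⟩ := hw
      obtain ⟨u, huC, rfl⟩ := hxcat
      obtain ⟨s', hs'C, rfl⟩ := hwcat
      obtain ⟨t', ht', hpx⟩ := hxpre
      rw [Set.mem_singleton_iff] at ht'
      have hxK : u ++ [σ] ∈ pre K := ⟨t, ht, ht' ▸ hpx⟩
      exact hobs.1 u s' σ hxK hs'C hwM (proj_cancel hproj).symm
    · -- brack K ∩ (pre C ∩ M) = K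
      ext x
      constructor
      · rintro ⟨⟨y, hyK, hpr⟩, hH⟩
        exact hobs.2 y x hyK hH hpr.symm
      · intro hx
        exact ⟨⟨x, hx, rfl⟩, subset_pre (hKC hx), hCM (hKC hx)⟩

lemma fix_obs (obs : α → Bool) (M C K : Set (List α))
    (hKC : K ⊆ C) (hfix : K = Omega obs M C K) : CObservable obs M C K := by
  have hKF : K ⊆ Fop obs M C K := by
    intro s hs
    rw [hfix] at hs
    exact ((supN_subset _ _ _) hs).2
  constructor
  · intro s s' σ hsK hs'C hs'M hproj
    obtain ⟨t, htK, hpt⟩ := hsK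
    have htF := hKF htK
    apply htF.2
    refine ⟨?_, hs'M⟩
    apply Set.mem_iUnion.mpr
    refine ⟨σ, ⟨s ++ [σ], ⟨⟨t, rfl, hpt⟩, ⟨s, ?_, rfl⟩⟩, ?_⟩, ⟨s', hs'C, rfl⟩⟩
    · exact pre_mono hKC (mem_pre_of_prefix ⟨t, htK, hpt⟩ (List.prefix_append s [σ]))
    · rw [proj_append, proj_append, hproj]
  · intro s s' hsK hs'H hproj
    rw [hfix] at hsK ⊢
    obtain ⟨A', ⟨hA1, hA2⟩, hsA⟩ := hsK
    refine ⟨A', ⟨hA1, hA2⟩, ?_⟩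
    rw [← hA2]
    exact ⟨⟨s, hsA, hproj.symm⟩, hs'H⟩

end RelObs

/-- `sup O(C)` is the largest fixpoint of `Ω` among sublanguages of `C`. -/
theorem statement4 {α : Type*} [Fintype α] (obs : α → Bool) (M C : Set (List α))
    (hCM : C ⊆ M) :
    supO obs M C = Omega obs M C (supO obs M C) ∧
      ∀ K : Set (List α), K ⊆ C → K = Omega obs M C K → K ⊆ supO obs M C := by
  constructor
  · exact (obs_fix obs M C (supO obs M C) hCM (supO_subset obs M C) (supO_obs obs M C)).symm
  · intro K hKC hfix s hs
    exact ⟨K, ⟨hKC, fix_obs obs M C K hKC hfix⟩, hs⟩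
end

section
/- Consider the iteration K_0 := C, K_j := Ω(K_{j-1}) for j ≥ 1. For every j ≥ 0 and every C-observable language K' ⊆ C, one has K' ⊆ K_j; consequently sup O(C) ⊆ ⋂_{j≥0} K_j. -/
open Set

open RelObs

/-- every `C`-observable `K' ⊆ C` is contained in every iterate `K_j`;
hence `sup O(C) ⊆ ⋂_j K_j`. -/
theorem statement6 {α : Type*} [Fintype α] (obs : α → Bool) (M C : Set (List α))
    (hCM : C ⊆ M) (K : ℕ → Set (List α))
    (hK0 : K 0 = C) (hKs : ∀ j : ℕ, K (j + 1) = Omega obs M C (K j)) :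
    (∀ (j : ℕ) (K' : Set (List α)), K' ⊆ C → CObservable obs M C K' → K' ⊆ K j) ∧
      supO obs M C ⊆ ⋂ j : ℕ, K j := by
  have hpreMono : ∀ A B : Set (List α), A ⊆ B → pre A ⊆ pre B := by
    rintro A B hAB x ⟨t, ht, hpt⟩
    exact ⟨t, hAB ht, hpt⟩
  have main : ∀ (j : ℕ) (K' : Set (List α)), K' ⊆ C → CObservable obs M C K' → K' ⊆ K j := by
    intro j
    induction j with
    | zero => intro K' hKC _; rw [hK0]; exact hKC
    | succ j ih =>
      intro K' hKC hObs
      rw [hKs]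
      have hsub : K' ⊆ K j := ih K' hKC hObs
      intro s hs
      refine ⟨K', ⟨?_, ?_⟩, hs⟩
      · -- K' ⊆ K j ∩ Fop obs M C (K j)
        intro t ht
        have htK : t ∈ K j := hsub ht
        refine ⟨htK, ⟨t, htK, List.prefix_rfl⟩, ?_⟩
        rintro w ⟨hwD, hwM⟩
        rw [Dop, Set.mem_iUnion] at hwD
        obtain ⟨σ, ⟨u', hu'mem, hproj⟩, s', hs'C, rfl⟩ := hwD
        obtain ⟨hu'pre, u, huC, rfl⟩ := hu'mem
        obtain ⟨t', ht', hpref⟩ := hu'pre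
        have ht'K : t' ∈ K' := by rw [show t' = t from ht']; exact ht
        have huK : u ++ [σ] ∈ pre K' := ⟨t', ht'K, hpref⟩
        have hps : proj obs u = proj obs s' := by
          have := hproj
          simp only [proj, List.filter_append] at this
          exact (List.append_cancel_right this).symm
        have : s' ++ [σ] ∈ pre K' := hObs.1 u s' σ huK hs'C hwM hps
        exact hpreMono K' (K j) hsub this
      · -- normality: brack obs K' ∩ (pre C ∩ M) = K'
        ext x
        constructor
        · rintro ⟨⟨t, htK', hpt⟩, hpC, hM⟩
          exact hObs.2 t x htK' ⟨hpC, hM⟩ hpt.symm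
        · intro hx
          exact ⟨⟨x, hx, rfl⟩, ⟨x, hKC hx, List.prefix_rfl⟩, hCM (hKC hx)⟩
  refine ⟨main, ?_⟩
  rintro x ⟨Kset, ⟨h1, h2⟩, hx⟩
  exact Set.mem_iInter.2 fun j => main j Kset h1 h2 hx
end

section
/- Consider the iteration K_0 := C, K_j := Ω(K_{j-1}) for j ≥ 1. For each j ≥ 1, K_j = ⋃ { [s] ∩ (C̄ ∩ M) : s ∈ Σ* and [s] ∩ (C̄ ∩ M) ⊆ K_{j-1} ∩ F(K_{j-1}) }. -/
open Set

open RelObs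

/-- `K_j` is the union of the cells `[s] ∩ (C̄ ∩ M)` contained in
`K_{j-1} ∩ F(K_{j-1})`. -/
theorem statement9 {α : Type*} [Fintype α] (obs : α → Bool) (M C : Set (List α))
    (hCM : C ⊆ M) (K : ℕ → Set (List α))
    (hK0 : K 0 = C) (hKs : ∀ j : ℕ, K (j + 1) = Omega obs M C (K j)) :
    ∀ j : ℕ,
      K (j + 1) =
        ⋃₀ {A | ∃ s : List α, A = brack obs {s} ∩ (pre C ∩ M) ∧
          brack obs {s} ∩ (pre C ∩ M) ⊆ K j ∩ Fop obs M C (K j)} := by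
  intro j
  rw [hKs j]
  unfold Omega supN
  ext x
  constructor
  · rintro ⟨A', ⟨hsub, hnorm⟩, hx⟩
    have hxH : x ∈ pre C ∩ M := by
      rw [← hnorm] at hx; exact hx.2
    refine ⟨brack obs {x} ∩ (pre C ∩ M), ⟨x, rfl, ?_⟩, ⟨x, rfl, rfl⟩, hxH⟩
    rintro y ⟨⟨t, ht, hyt⟩, hyH⟩
    apply hsub
    rw [← hnorm]
    exact ⟨⟨x, hx, by rw [hyt, Set.eq_of_mem_singleton ht]⟩, hyH⟩
  · rintro ⟨B, ⟨s, rfl, hsub⟩, hx⟩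
    refine ⟨brack obs {s} ∩ (pre C ∩ M), ⟨hsub, ?_⟩, hx⟩
    ext y
    constructor
    · rintro ⟨⟨t, ⟨⟨u, hu, htu⟩, _⟩, hyt⟩, hyH⟩
      exact ⟨⟨s, rfl, by simp only [Set.mem_singleton_iff] at hu; rw [hyt, htu, hu]⟩, hyH⟩
    · rintro ⟨hy1, hy2⟩
      exact ⟨⟨y, ⟨hy1, hy2⟩, rfl⟩, hy2⟩
end

section
/- For every language K ⊆ Σ*, F(K) = K̄ ∩ sup F̂( ⋂_{σ∈Σ} ( Ñ(K̄ ∪ (M̄ ∩ C̄.σ)ᶜ) ∪ (C̄.σ)ᶜ ) ), where Ñ(L) := {s ∈ L : [s] ⊆ L} is the supremal sublanguage L' of L satisfying P⁻¹P(L') = L'. -/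
open Set

open RelObs


lemma mem_supFhat' {α : Type*} {A : Set (List α)} {s : List α} :
    s ∈ supFhat A ↔ ∀ t, t <+: s → t ∈ A := by
  constructor
  · rintro ⟨A', ⟨hsub, hcl⟩, hs⟩ t ht
    have : t ∈ RelObs.pre A' := ⟨s, hs, ht⟩
    exact hsub (hcl ▸ this)
  · intro h
    refine ⟨{t | t <+: s}, ⟨fun t ht => h t ht, ?_⟩, List.prefix_refl s⟩
    ext u
    constructor
    · rintro ⟨t, ht, hu⟩; exact hu.trans ht
    · intro hu; exact ⟨u, hu, List.prefix_refl u⟩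

/-- decomposition of `F(K)` into standard language operations. -/
theorem statement14 {α : Type*} [Fintype α] (obs : α → Bool) (M C : Set (List α))
    (hCM : C ⊆ M) (K : Set (List α)) :
    Fop obs M C K =
      pre K ∩
        supFhat (⋂ σ : α,
          (tilN obs (pre K ∪ (pre M ∩ catSig (pre C) σ)ᶜ) ∪ (catSig (pre C) σ)ᶜ)) := by
  ext s
  simp only [Set.mem_inter_iff, mem_supFhat', Set.mem_iInter, Fop, Set.mem_setOf_eq]
  constructor
  · rintro ⟨hsK, hD⟩
    refine ⟨hsK, fun t ht σ => ?_⟩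
    by_cases hc : t ∈ catSig (pre C) σ
    · left
      have key : ∀ u, proj obs u = proj obs t → u ∈ pre K ∪ (pre M ∩ catSig (pre C) σ)ᶜ := by
        intro u hu
        by_cases hm : u ∈ pre M ∩ catSig (pre C) σ
        · left
          apply hD
          refine ⟨Set.mem_iUnion.2 ⟨σ, ⟨t, ⟨⟨s, rfl, ht⟩, hc⟩, hu⟩, hm.2⟩, hm.1⟩
        · right; exact hm
      exact ⟨key t rfl, fun u ⟨v, hv, huv⟩ => key u (by rw [huv, hv])⟩
    · right; exact hc
  · rintro ⟨hsK, h⟩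
    refine ⟨hsK, ?_⟩
    rintro u ⟨hDu, huM⟩
    obtain ⟨σ, ⟨t, ⟨⟨x, hx, ht⟩, hc⟩, hut⟩, huc⟩ := Set.mem_iUnion.1 hDu
    rw [Set.mem_singleton_iff] at hx; subst hx
    rcases h t ht σ with htN | htc
    · rcases htN.2 ⟨t, rfl, hut⟩ with hK | hno
      · exact hK
      · exact absurd ⟨huM, huc⟩ hno
    · exact absurd hc htc
end

section
/- The supremal controllable and relatively observable sublanguage sup CO(C) is a fixpoint of Γ, i.e. sup CO(C) = Γ(sup CO(C)); moreover, every K ⊆ C satisfying K = Γ(K) satisfies K ⊆ sup CO(C). Hence sup CO(C) is the largest fixpoint of Γ among sublanguages of C. -/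
open Set

open RelObs

lemma mem_pre_sUnion {α : Type*} {S : Set (Set (List α))} {s : List α} :
    s ∈ pre (⋃₀ S) ↔ ∃ K ∈ S, s ∈ pre K := by
  constructor
  · rintro ⟨t, ⟨K, hK, htK⟩, hpre⟩
    exact ⟨K, hK, t, htK, hpre⟩
  · rintro ⟨K, hK, t, htK, hpre⟩
    exact ⟨t, ⟨K, hK, htK⟩, hpre⟩

lemma cobs_sUnion {α : Type*} (obs : α → Bool) (M C : Set (List α))
    {S : Set (Set (List α))} (h : ∀ K ∈ S, CObservable obs M C K) :
    CObservable obs M C (⋃₀ S) := by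
  constructor
  · intro s s' σ hs hs' hsm hp
    obtain ⟨K, hK, hsK⟩ := mem_pre_sUnion.1 hs
    exact mem_pre_sUnion.2 ⟨K, hK, (h K hK).1 s s' σ hsK hs' hsm hp⟩
  · rintro s s' ⟨K, hK, hsK⟩ hs' hp
    exact ⟨K, hK, (h K hK).2 s s' hsK hs' hp⟩

lemma contr_sUnion {α : Type*} (Su : Set α) (M : Set (List α))
    {S : Set (Set (List α))} (h : ∀ K ∈ S, Controllable Su M K) :
    Controllable Su M (⋃₀ S) := by
  intro s σ hσ hs hsm
  obtain ⟨K, hK, hsK⟩ := mem_pre_sUnion.1 hs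
  exact mem_pre_sUnion.2 ⟨K, hK, h K hK s σ hσ hsK hsm⟩

lemma supC_subset {α : Type*} (Su : Set α) (M K : Set (List α)) :
    supC Su M K ⊆ K := by
  rintro s ⟨K', ⟨hK', _⟩, hs⟩; exact hK' hs

lemma supC_controllable {α : Type*} (Su : Set α) (M K : Set (List α)) :
    Controllable Su M (supC Su M K) :=
  contr_sUnion Su M (fun _ h => h.2)

lemma Gamma_subset_supC {α : Type*} (obs : α → Bool) (Su : Set α)
    (M C K : Set (List α)) : Gamma obs Su M C K ⊆ supC Su M K := by
  rintro s ⟨K', ⟨hK', _⟩, hs⟩; exact hK' hs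

lemma Gamma_cobs {α : Type*} (obs : α → Bool) (Su : Set α)
    (M C K : Set (List α)) : CObservable obs M C (Gamma obs Su M C K) :=
  cobs_sUnion obs M C (fun _ h => h.2)

lemma supCO_props {α : Type*} (obs : α → Bool) (Su : Set α) (M C : Set (List α)) :
    supCO obs Su M C ⊆ C ∧ Controllable Su M (supCO obs Su M C) ∧
      CObservable obs M C (supCO obs Su M C) :=
  ⟨fun s hs => by obtain ⟨K, ⟨hKC, _⟩, hsK⟩ := hs; exact hKC hsK,
   contr_sUnion Su M (fun _ h => h.2.1),
   cobs_sUnion obs M C (fun _ h => h.2.2)⟩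

/-- `sup CO(C)` is the largest fixpoint of `Γ` among sublanguages
of `C`. -/
theorem statement17 {α : Type*} [Fintype α] (obs : α → Bool) (Su : Set α)
    (M C : Set (List α)) (hCM : C ⊆ M) :
    supCO obs Su M C = Gamma obs Su M C (supCO obs Su M C) ∧
      ∀ K : Set (List α), K ⊆ C → K = Gamma obs Su M C K →
        K ⊆ supCO obs Su M C := by
  obtain ⟨hSC, hScon, hSobs⟩ := supCO_props obs Su M C
  constructor
  · apply Subset.antisymm
    · intro s hs
      exact ⟨supCO obs Su M C, ⟨fun t ht => ⟨supCO obs Su M C, ⟨subset_rfl, hScon⟩, ht⟩,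
        hSobs⟩, hs⟩
    · exact (Gamma_subset_supC obs Su M C _).trans (supC_subset Su M _)
  · intro K hKC hfix
    have hKsupC : K = supC Su M K := by
      apply Subset.antisymm
      · nth_rewrite 1 [hfix]; exact Gamma_subset_supC obs Su M C K
      · exact supC_subset Su M K
    intro s hs
    refine ⟨K, ⟨hKC, ?_, ?_⟩, hs⟩
    · rw [hKsupC]; exact supC_controllable Su M K
    · rw [hfix]; exact Gamma_cobs obs Su M C K
end
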